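/- arXiv:2512.04310 — 3 statements merged into one kernel-verified Lean document; each statement's English description precedes it below -/
import Mathlib

section
/- Let n, m, d be natural numbers, W an n×n real matrix, B an n×d real matrix, and φ : ℝ → ℝ a continuously differentiable function applied componentwise to vectors in ℝ^n. Define f : ℝ^n × ℝ^d → ℝ^n by f (z, v) = W (φ.(z)) − z + B v. Let u : ℝ^m × ℝ → ℝ^d be C¹ and let x : ℝ^m × ℝ → ℝ^n be C² with ∂x/∂t (κ, t) = f (x (κ, t), u (κ, t)) for all (κ, t) and x (κ, 0) = x₀ for all κ. For each i ∈ {1, …, m} let A_i (κ, t) = ∂x/∂κ_i (κ, t) ∈ ℝ^n. Then A_i (κ, 0) = 0 and ∂A_i/∂t (κ, t) = (W · diag(φ'.(x (κ, t))) − I) (A_i (κ, t)) + B (∂u/∂κ_i (κ, t)), where diag(φ'.(x)) is the diagonal matrix with entries φ'(x_j) and I is the identity matrix. -/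
/-- **Corollary 3.5 (RNN metric adjoint).** For the RNN system
`ẋ = Wφ(x) − x + Bu(t)` with inputs parametrised by `κ ∈ ℝ^m`, the tangent columns
`A_i = ∂x/∂κ_i` satisfy `A_i(κ, 0) = 0` and
`Ȧ_i = (W diag(φ'(x)) − I) A_i + B ∂u/∂κ_i`. -/
theorem rnn_adjoint_dynamics
    (n m d : ℕ)
    (W : Matrix (Fin n) (Fin n) ℝ) (B : Matrix (Fin n) (Fin d) ℝ)
    (φ : ℝ → ℝ) (hφ : ContDiff ℝ 1 φ)
    (f : (Fin n → ℝ) × (Fin d → ℝ) → (Fin n → ℝ))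
    (hfdef : ∀ (z : Fin n → ℝ) (v : Fin d → ℝ),
      f (z, v) = W.mulVec (fun j => φ (z j)) - z + B.mulVec v)
    (u : (Fin m → ℝ) × ℝ → (Fin d → ℝ)) (hu : ContDiff ℝ 1 u)
    (x₀ : Fin n → ℝ)
    (x : (Fin m → ℝ) × ℝ → (Fin n → ℝ)) (hx : ContDiff ℝ 2 x)
    (hode : ∀ p : (Fin m → ℝ) × ℝ, fderiv ℝ x p (0, 1) = f (x p, u p))
    (hinit : ∀ κ : Fin m → ℝ, x (κ, 0) = x₀)
    (A : Fin m → (Fin m → ℝ) × ℝ → (Fin n → ℝ))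
    (hA : ∀ (i : Fin m) (p : (Fin m → ℝ) × ℝ),
      A i p = fderiv ℝ x p (Pi.single i 1, 0)) :
    ∀ (i : Fin m) (κ : Fin m → ℝ),
      A i (κ, 0) = 0 ∧
      ∀ t : ℝ,
        deriv (fun s : ℝ => A i (κ, s)) t =
          (W * Matrix.diagonal (fun j => deriv φ (x (κ, t) j)) - 1).mulVec (A i (κ, t)) +
            B.mulVec (fderiv ℝ u (κ, t) (Pi.single i 1, 0)) := by
  intro i κ
  have hxd : Differentiable ℝ x := hx.differentiable (by norm_num)
  have hud : Differentiable ℝ u := hu.differentiable (by norm_num)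
  have hφd : Differentiable ℝ φ := hφ.differentiable (by norm_num)
  constructor
  · rw [hA]
    have h1 : HasFDerivAt (fun κ' : Fin m → ℝ => ((κ', (0:ℝ)) : (Fin m → ℝ) × ℝ))
        (ContinuousLinearMap.inl ℝ (Fin m → ℝ) ℝ) κ :=
      (ContinuousLinearMap.inl ℝ (Fin m → ℝ) ℝ).hasFDerivAt
    have hcomp : HasFDerivAt (fun κ' : Fin m → ℝ => x (κ', 0))
        ((fderiv ℝ x (κ, 0)).comp (ContinuousLinearMap.inl ℝ (Fin m → ℝ) ℝ)) κ := by
      exact ((hxd (κ, 0)).hasFDerivAt.comp (x := κ) h1 : )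
    have hconst : (fun κ' : Fin m → ℝ => x (κ', 0)) = fun _ => x₀ := funext hinit
    have hz : HasFDerivAt (fun κ' : Fin m → ℝ => x (κ', 0))
        (0 : (Fin m → ℝ) →L[ℝ] (Fin n → ℝ)) κ := by
      rw [hconst]; exact hasFDerivAt_const x₀ κ
    have huniq := hcomp.unique hz
    have hev : fderiv ℝ x (κ, 0) (Pi.single i 1, 0) =
        ((fderiv ℝ x (κ, 0)).comp (ContinuousLinearMap.inl ℝ (Fin m → ℝ) ℝ)) (Pi.single i 1) :=
      rfl
    rw [hev, huniq]; rfl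
  · intro t
    have hgC : ContDiff ℝ 1 (fderiv ℝ x) := hx.fderiv_right le_rfl
    have hgd : Differentiable ℝ (fderiv ℝ x) := hgC.differentiable (by norm_num)
    set e : (Fin m → ℝ) × ℝ := (Pi.single i 1, 0) with he
    set p : (Fin m → ℝ) × ℝ := (κ, t) with hp
    set D2 := fderiv ℝ (fderiv ℝ x) p with hD2
    -- symmetry of second derivative
    have hsymm : ∀ v w, D2 v w = D2 w v :=
      second_derivative_symmetric (fun y => (hxd y).hasFDerivAt) (hgd p).hasFDerivAt
    -- Step A: derivative of s ↦ A i (κ, s)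
    have hAe : (fun s : ℝ => A i (κ, s)) = fun s : ℝ => fderiv ℝ x (κ, s) e := by
      funext s; rw [hA]
    have hcurve : HasDerivAt (fun s : ℝ => ((κ, s) : (Fin m → ℝ) × ℝ)) ((0 : Fin m → ℝ), (1:ℝ)) t :=
      (hasDerivAt_const t κ).prodMk (hasDerivAt_id t)
    have hge : HasFDerivAt (fun q => fderiv ℝ x q e) (D2.flip e) p := by
      have := (hgd p).hasFDerivAt.clm_apply (hasFDerivAt_const e p)
      simpa using this
    have hda : HasDerivAt (fun s : ℝ => fderiv ℝ x (κ, s) e) (D2.flip e ((0 : Fin m → ℝ), (1:ℝ))) t := by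
      have := hge.comp_hasDerivAt t hcurve
      simpa [Function.comp_def] using this
    have hderivA : deriv (fun s : ℝ => A i (κ, s)) t = D2 (0, 1) e := by
      rw [hAe, hda.deriv]; rfl
    -- Step B: compute fderiv of q ↦ fderiv x q (0,1) = f (x q, u q)
    have hΦ : HasFDerivAt (fun q => (fun j => φ (x q j)))
        (ContinuousLinearMap.pi
          (fun j => deriv φ (x p j) • ((ContinuousLinearMap.proj j).comp (fderiv ℝ x p)))) p := by
      apply hasFDerivAt_pi.2
      intro j
      have hxj : HasFDerivAt (fun q => x q j)
          ((ContinuousLinearMap.proj j).comp (fderiv ℝ x p)) p := by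
        have := (ContinuousLinearMap.proj (R := ℝ) (φ := fun _ : Fin n => ℝ) j).hasFDerivAt.comp
          p (hxd p).hasFDerivAt
        simpa [Function.comp_def] using this
      exact ((hφd (x p j)).hasDerivAt).comp_hasFDerivAt p hxj
    set WM := LinearMap.toContinuousLinearMap W.mulVecLin with hWM
    set BM := LinearMap.toContinuousLinearMap B.mulVecLin with hBM
    set Φ' : ((Fin m → ℝ) × ℝ) →L[ℝ] (Fin n → ℝ) :=
      ContinuousLinearMap.pi
        (fun j => deriv φ (x p j) • ((ContinuousLinearMap.proj j).comp (fderiv ℝ x p))) with hΦ'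
    set L : ((Fin m → ℝ) × ℝ) →L[ℝ] (Fin n → ℝ) :=
      WM.comp Φ' - fderiv ℝ x p + BM.comp (fderiv ℝ u p) with hL
    have hF : HasFDerivAt (fun q => W.mulVec (fun j => φ (x q j)) - x q + B.mulVec (u q)) L p := by
      have h1 : HasFDerivAt (fun q => W.mulVec (fun j => φ (x q j))) (WM.comp Φ') p := by
        have := WM.hasFDerivAt.comp p hΦ
        simpa [Function.comp, hWM] using this
      have h2 : HasFDerivAt (fun q => B.mulVec (u q)) (BM.comp (fderiv ℝ u p)) p := by
        have := BM.hasFDerivAt.comp p (hud p).hasFDerivAt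
        simpa [Function.comp, hBM] using this
      exact (h1.sub (hxd p).hasFDerivAt).add h2
    have hGeq : (fun q => fderiv ℝ x q ((0 : Fin m → ℝ), (1:ℝ))) =
        fun q => W.mulVec (fun j => φ (x q j)) - x q + B.mulVec (u q) := by
      funext q; rw [hode q, hfdef]
    have hG2 : HasFDerivAt (fun q => fderiv ℝ x q ((0 : Fin m → ℝ), (1:ℝ)))
        (D2.flip (0, 1)) p := by
      have := (hgd p).hasFDerivAt.clm_apply
        (hasFDerivAt_const ((0 : Fin m → ℝ), (1:ℝ)) p)
      simpa using this
    have hG1 : HasFDerivAt (fun q => fderiv ℝ x q ((0 : Fin m → ℝ), (1:ℝ))) L p := by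
      rw [hGeq]; exact hF
    have hflipL : D2.flip (0, 1) = L := hG2.unique hG1
    have hLe : D2 e (0, 1) = L e := by
      calc D2 e (0, 1) = D2.flip (0, 1) e := rfl
        _ = L e := by rw [hflipL]
    -- assemble
    rw [hderivA, hsymm, hLe]
    have hAi : A i p = fderiv ℝ x p e := by rw [hA]
    rw [hAi, hL]
    have hvec : Φ' e = (Matrix.diagonal fun j => deriv φ (x p j)).mulVec (fderiv ℝ x p e) := by
      funext k
      simp [hΦ', Matrix.mulVec_diagonal]
    simp only [ContinuousLinearMap.add_apply, ContinuousLinearMap.sub_apply,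
      ContinuousLinearMap.comp_apply, hWM, hBM,
      LinearMap.coe_toContinuousLinearMap', Matrix.mulVecLin_apply]
    rw [hvec, Matrix.mulVec_mulVec, Matrix.sub_mulVec, Matrix.one_mulVec]
end

section
/- Let n, r, d be natural numbers, α : Fin r → ℝ^n, β : Fin r → ℝ^n, b : Fin d → ℝ^n, φ : ℝ^n → ℝ^n any function, and u : ℝ → ℝ^d. Let V = span_ℝ({α_1, …, α_r} ∪ {b_1, …, b_d}) ⊆ ℝ^n, and let Q denote the orthogonal projection of ℝ^n onto the orthogonal complement V^⊥. Suppose x : ℝ → ℝ^n is differentiable and satisfies x' (t) = −x (t) + Σ_{i=1}^r ⟨β_i, φ(x (t))⟩ · α_i + Σ_{j=1}^d u_j (t) · b_j for all t. Then Q (x (t)) = e^{−t} · Q (x (0)) for all t; consequently the Euclidean distance from x (t) to the subspace V equals e^{−t} times the distance from x (0) to V, and if x (0) ∈ V then x (t) ∈ V for all t. -/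
open scoped RealInnerProductSpace

/-- **Low-rank RNNs constrain the embedding dimensionality.** For the RNN
`ẋ = −x + Σᵢ ⟨βᵢ, φ(x)⟩ αᵢ + Σⱼ uⱼ(t) bⱼ`, the component of the state orthogonal to
`V = span({αᵢ} ∪ {bⱼ})` decays as `e^{−t}`: `Q(x t) = e^{−t} Q(x 0)` where `Q` is the
orthogonal projection onto `V^⊥`; hence `dist(x t, V) = e^{−t} dist(x 0, V)` and the
subspace `V` is invariant. -/
theorem low_rank_rnn_subspace_constraint
    (n r d : ℕ)
    (α β : Fin r → EuclideanSpace ℝ (Fin n))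
    (b : Fin d → EuclideanSpace ℝ (Fin n))
    (φ : EuclideanSpace ℝ (Fin n) → EuclideanSpace ℝ (Fin n))
    (u : ℝ → Fin d → ℝ)
    (V : Submodule ℝ (EuclideanSpace ℝ (Fin n)))
    (hV : V = Submodule.span ℝ (Set.range α ∪ Set.range b))
    (x : ℝ → EuclideanSpace ℝ (Fin n))
    (hode : ∀ t : ℝ, HasDerivAt x
      (-x t + (∑ i : Fin r, ⟪β i, φ (x t)⟫ • α i) + ∑ j : Fin d, u t j • b j) t) :
    (∀ t : ℝ, (Submodule.orthogonalProjectionOnto Vᗮ (x t) : EuclideanSpace ℝ (Fin n)) =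
        Real.exp (-t) • (Submodule.orthogonalProjectionOnto Vᗮ (x 0) : EuclideanSpace ℝ (Fin n))) ∧
    (∀ t : ℝ, Metric.infDist (x t) (V : Set (EuclideanSpace ℝ (Fin n))) =
        Real.exp (-t) * Metric.infDist (x 0) (V : Set (EuclideanSpace ℝ (Fin n)))) ∧
    (x 0 ∈ V → ∀ t : ℝ, x t ∈ V) := by
  let E := EuclideanSpace ℝ (Fin n)
  -- Q : E →L[ℝ] E, the orthogonal projection onto Vᗮ (composed with inclusion)
  set Q : E →L[ℝ] E := Vᗮ.subtypeL.comp (Submodule.orthogonalProjectionOnto Vᗮ) with hQ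
  have hQval : ∀ v : E, Q v = (Submodule.orthogonalProjectionOnto Vᗮ v : E) := fun v => rfl
  -- Q vanishes on V
  have hQV : ∀ v : E, v ∈ V → Q v = 0 := by
    intro v hv
    have : v ∈ Vᗮᗮ := V.le_orthogonal_orthogonal hv
    have h0 : Submodule.orthogonalProjectionOnto Vᗮ v = 0 := Submodule.orthogonalProjectionOnto_eq_zero_iff.2 this
    simp [hQval, h0]
  have hα : ∀ i, α i ∈ V := fun i => hV ▸ Submodule.subset_span (Or.inl ⟨i, rfl⟩)
  have hb : ∀ j, b j ∈ V := fun j => hV ▸ Submodule.subset_span (Or.inr ⟨j, rfl⟩)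
  -- the projected trajectory
  set y : ℝ → E := fun t => Q (x t) with hy
  have hy' : ∀ t, HasDerivAt y (-(y t)) t := by
    intro t
    have h := (Q.hasFDerivAt.comp_hasDerivAt t (hode t))
    have heq : Q (-x t + (∑ i : Fin r, ⟪β i, φ (x t)⟫ • α i) + ∑ j : Fin d, u t j • b j)
        = -(y t) := by
      simp only [map_add, map_neg, map_sum, map_smul]
      rw [Finset.sum_eq_zero (fun i _ => by rw [hQV _ (hα i), smul_zero]),
        Finset.sum_eq_zero (fun j _ => by rw [hQV _ (hb j), smul_zero])]
      simp [hy]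
    rw [heq] at h
    exact h
  -- e^t • y t is constant
  have hg : ∀ t, HasDerivAt (fun s => Real.exp s • y s) 0 t := by
    intro t
    have h : HasDerivAt (fun s => Real.exp s • y s) (Real.exp t • -(y t) + Real.exp t • y t) t :=
      (Real.hasDerivAt_exp t).smul (hy' t)
    rwa [smul_neg, neg_add_cancel] at h
  have hconst : ∀ t, Real.exp t • y t = y 0 := by
    intro t
    have := is_const_of_deriv_eq_zero (f := fun s => Real.exp s • y s)
      (fun s => (hg s).differentiableAt) (fun s => (hg s).deriv) t 0
    simpa using this
  have key : ∀ t, y t = Real.exp (-t) • y 0 := by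
    intro t
    have h := hconst t
    have : Real.exp (-t) • Real.exp t • y t = Real.exp (-t) • y 0 := by rw [h]
    rwa [smul_smul, ← Real.exp_add, neg_add_cancel, Real.exp_zero, one_smul] at this
  have keyQ : ∀ t : ℝ, (Submodule.orthogonalProjectionOnto Vᗮ (x t) : E) =
      Real.exp (-t) • (Submodule.orthogonalProjectionOnto Vᗮ (x 0) : E) := fun t => key t
  -- distance to V equals norm of y
  have hdist : ∀ v : E, Metric.infDist v (V : Set E) = ‖Q v‖ := by
    intro v
    have h1 : Metric.infDist v (V : Set E) = ⨅ w : V, ‖v - w‖ := by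
      rw [Metric.infDist_eq_iInf]
      exact iInf_congr fun w => dist_eq_norm _ _
    rw [h1, ← Submodule.starProjection_minimal, hQval, ← Submodule.starProjection_apply, Submodule.starProjection_orthogonal_val]
  refine ⟨keyQ, fun t => ?_, fun h0 t => ?_⟩
  · rw [hdist, hdist]
    show ‖y t‖ = Real.exp (-t) * ‖y 0‖
    rw [key t, norm_smul, Real.norm_eq_abs, abs_of_pos (Real.exp_pos _)]
  · have hy0 : y 0 = 0 := hQV _ h0
    have hyt : y t = 0 := by rw [key t, hy0, smul_zero]
    have hyt' : (Submodule.orthogonalProjectionOnto Vᗮ (x t) : EuclideanSpace ℝ (Fin n)) = 0 := hyt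
    have hmem : x t ∈ Vᗮᗮ := Submodule.orthogonalProjectionOnto_eq_zero_iff.1
      (Subtype.coe_injective (by simpa using hyt'))
    rwa [Submodule.orthogonal_orthogonal] at hmem
end

section
/- Let k and n be natural numbers, let Θ = (Fin k → Real.Angle) be the k-dimensional torus (the k-fold product of the circle ℝ/2πℤ), let T : Fin k → ℝ be a family of output times, and let x : ℝ → Θ → ℝ^n be a family of maps such that x t is continuous on Θ for every t ∈ ℝ. Assume: (flow property) for all t, t' ∈ ℝ there exists a map h : ℝ^n → ℝ^n with x t' θ = h (x t θ) for all θ ∈ Θ; (correct task performance) for every index i ∈ Fin k there exists a decoder D_i : ℝ^n → ℝ × ℝ such that D_i (x (T i) θ) = (cos (θ i), sin (θ i)) for all θ ∈ Θ. Then for every t ∈ ℝ the map x t : Θ → ℝ^n is injective, and hence (being a continuous injection from a compact space into a Hausdorff space) a closed topological embedding, so its image in ℝ^n with the subspace topology is homeomorphic to the k-torus. -/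
/-- **Proposition S2.1 (sequential working memory).** If an RNN state map
`x : ℝ → (Fin k → Real.Angle) → ℝ^n` is continuous in the stored angles, satisfies
the flow property (the state at time `t'` is a function of the state at time `t`),
and performs the task correctly (a decoder recovers `(cos θᵢ, sin θᵢ)` at the `i`-th
output time), then at every time `t` the map `x t` is injective on the `k`-torus,
hence a closed topological embedding, and its image is homeomorphic to the torus. -/
theorem working_memory_torus_embedding
    (k n : ℕ)
    (T : Fin k → ℝ)
    (x : ℝ → (Fin k → Real.Angle) → (Fin n → ℝ))
    (hcont : ∀ t : ℝ, Continuous (x t))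
    (hflow : ∀ t t' : ℝ, ∃ h : (Fin n → ℝ) → (Fin n → ℝ),
      ∀ θ : Fin k → Real.Angle, x t' θ = h (x t θ))
    (hdec : ∀ i : Fin k, ∃ D : (Fin n → ℝ) → ℝ × ℝ,
      ∀ θ : Fin k → Real.Angle,
        D (x (T i) θ) = ((θ i).cos, (θ i).sin)) :
    ∀ t : ℝ,
      Function.Injective (x t) ∧
      Topology.IsClosedEmbedding (x t) ∧
      Nonempty ((Set.range (x t)) ≃ₜ (Fin k → Real.Angle)) := by
  intro t
  have hinj : Function.Injective (x t) := by
    intro θ θ' hxe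
    funext i
    obtain ⟨h, hh⟩ := hflow t (T i)
    obtain ⟨D, hD⟩ := hdec i
    have hx : x (T i) θ = x (T i) θ' := by rw [hh, hh, hxe]
    have := hD θ
    rw [hx, hD θ'] at this
    have hc : (θ i).cos = (θ' i).cos := (congrArg Prod.fst this).symm
    have hs : (θ i).sin = (θ' i).sin := (congrArg Prod.snd this).symm
    revert hc hs
    induction (θ i) using Real.Angle.induction_on
    induction (θ' i) using Real.Angle.induction_on
    intro hc hs
    exact Real.Angle.cos_sin_inj (by simpa using hc) (by simpa using hs)
  haveI : Fact (0 < 2 * Real.pi) := ⟨by positivity⟩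
  haveI : CompactSpace Real.Angle := AddCircle.compactSpace _
  have hce : Topology.IsClosedEmbedding (x t) := (hcont t).isClosedEmbedding hinj
  exact ⟨hinj, hce, ⟨(Topology.IsEmbedding.toHomeomorph hce.toIsEmbedding).symm⟩⟩
end
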